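/- (Arithmetic core of Theorem 3, Case 1.) Let ι be a type with decidable equality, NC, DIFF : ι → ℕ, S a finite set of ι, x ∉ S, and m ≥ 2 a natural number. Suppose A and B are naturals with A ≤ Σ_{j∈S} NC j + topSum (m−2) DIFF S and B ≤ NC x + DIFF x. Then A + B ≤ Σ_{j ∈ insert x S} NC j + topSum (m−1) DIFF (insert x S). -/

import Mathlib

/-- `topSum k f S` is the maximum of `∑ j in T, f j` over all subsets `T ⊆ S`
with `|T| ≤ k` (equivalently, the sum of the `min(k,|S|)` largest values of `f` on `S`). -/
def topSum {ι : Type*} [DecidableEq ι] (k : ℕ) (f : ι → ℕ) (S : Finset ι) : ℕ :=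
  (S.powerset.filter (fun T => T.card ≤ k)).sup (fun T => ∑ j ∈ T, f j)

section topSum

variable {ι : Type*} [DecidableEq ι] {k : ℕ} {f : ι → ℕ} {S T : Finset ι}

theorem sum_le_topSum (hTS : T ⊆ S) (hT : T.card ≤ k) : ∑ j ∈ T, f j ≤ topSum k f S :=
  Finset.le_sup (f := fun T => ∑ j ∈ T, f j) (by simp [hTS, hT])

theorem topSum_le {c : ℕ} (h : ∀ T ⊆ S, T.card ≤ k → ∑ j ∈ T, f j ≤ c) : topSum k f S ≤ c :=
  Finset.sup_le fun T hT => by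
    rw [Finset.mem_filter, Finset.mem_powerset] at hT
    exact h T hT.1 hT.2

theorem topSum_add_le_topSum_insert {x : ι} (hx : x ∉ S) :
    topSum k f S + f x ≤ topSum (k + 1) f (insert x S) := by
  have extend : ∀ T ⊆ S, T.card ≤ k → ∑ j ∈ T, f j + f x ≤ topSum (k + 1) f (insert x S) := by
    intro T hTS hT
    rw [add_comm, ← Finset.sum_insert fun h => hx (hTS h)]
    exact sum_le_topSum (Finset.insert_subset_insert x hTS)
      ((Finset.card_insert_le x T).trans (Nat.add_le_add_right hT 1))
  -- makes the truncated subtraction below exact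
  have hfx : f x ≤ topSum (k + 1) f (insert x S) := by
    simpa using extend ∅ (Finset.empty_subset S) (Nat.zero_le k)
  have := topSum_le fun T hTS hT => Nat.le_sub_of_add_le (extend T hTS hT)
  omega

end topSum

theorem theorem3_case1_arith {ι : Type*} [DecidableEq ι] (NC DIFF : ι → ℕ)
    (S : Finset ι) (x : ι) (hx : x ∉ S) (m : ℕ) (hm : 2 ≤ m) (A B : ℕ)
    (hA : A ≤ ∑ j ∈ S, NC j + topSum (m - 2) DIFF S)
    (hB : B ≤ NC x + DIFF x) :
    A + B ≤ ∑ j ∈ insert x S, NC j + topSum (m - 1) DIFF (insert x S) := by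
  have hk : m - 1 = m - 2 + 1 := by omega
  have := topSum_add_le_topSum_insert (k := m - 2) (f := DIFF) hx
  rw [Finset.sum_insert hx, hk]
  omega
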